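/- Assume additionally that λ(t)/t → 1 and u1(t)/t² → 1 as t → ∞. Let (a0, a2) be a solution of the ODE system (instA2) whose value at some initial time t* > 0 lies in R1 := {(a0,a2) : a0 < −1, 0 < a2 < 1}. Then exactly one of the following holds: either there exists t > t* at which (a0, a2)(t) lies in R0 := {(a0,a2) : −1 < a0 < 1, 0 < a2 < 1} or in R∞ := {(a0,a2) : a0 < −1, a2 > 1}; or the solution remains in R1 for all forward time, extends to [t*, ∞), and satisfies (a0, a2)(t) → (−1, 1) as t → ∞. -/

import Mathlib

open Set Filter

/-- A solution of the ODE system (instA2), with `μ² = u1² − u0²`: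
`a0' = −(4λ/μ²)(a2²(u1 − u0) + a0·u1 + u0)`, `a2' = −(3/(2λ))·a2·(a0 + 1)`. -/
def IsSolInstA2 (u0 : ℝ) (lam u1 a0 a2 : ℝ → ℝ) (s : Set ℝ) : Prop :=
  ∀ t ∈ s,
    HasDerivAt a0 (-(4 * lam t / (u1 t ^ 2 - u0 ^ 2)) *
      (a2 t ^ 2 * (u1 t - u0) + a0 t * u1 t + u0)) t ∧
    HasDerivAt a2 (-(3 / (2 * lam t)) * a2 t * (a0 t + 1)) t


private lemma ev_slope {f : ℝ → ℝ} {x d : ℝ} (hf : HasDerivAt f d x) (hd : 0 < d) :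
    ∀ᶠ t in nhdsWithin x (Ioi x), f x < f t := by
  have h1 : Tendsto (slope f x) (nhdsWithin x {x}ᶜ) (nhds d) :=
    hasDerivAt_iff_tendsto_slope.mp hf
  have h2 : ∀ᶠ t in nhdsWithin x {x}ᶜ, 0 < slope f x t := h1.eventually (lt_mem_nhds hd)
  have h3 : ∀ᶠ t in nhdsWithin x (Ioi x), 0 < slope f x t :=
    h2.filter_mono (nhdsWithin_mono x fun t ht => ht.ne')
  filter_upwards [h3, self_mem_nhdsWithin] with t hs (ht : x < t)
  have h4 : 0 < (f t - f x) := by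
    have := mul_pos hs (sub_pos.2 ht)
    rwa [slope_def_field, div_mul_cancel₀ _ (sub_ne_zero.2 ht.ne')] at this
  linarith

private lemma unbounded_of_deriv_ge (f d : ℝ → ℝ) (t0 c M : ℝ) (ht0 : 0 < t0) (hc : 0 < c)
    (hf : ∀ t ∈ Ici t0, HasDerivAt f (d t) t)
    (hd : ∀ t ∈ Ici t0, c / t ≤ d t)
    (hM : ∀ t ∈ Ici t0, f t < M) : False := by
  set g : ℝ → ℝ := fun t => f t - c * Real.log t with hg
  have hgd : ∀ t ∈ Ici t0, HasDerivAt g (d t - c * t⁻¹) t := by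
    intro t ht
    have htpos : (0:ℝ) < t := lt_of_lt_of_le ht0 ht
    exact (hf t ht).sub ((Real.hasDerivAt_log htpos.ne').const_mul c)
  have hmono : MonotoneOn g (Ici t0) := by
    apply monotoneOn_of_deriv_nonneg (convex_Ici t0)
    · exact fun t ht => ((hgd t ht).continuousAt).continuousWithinAt
    · intro t ht
      rw [interior_Ici] at ht
      exact ((hgd t (mem_Ici.mpr (le_of_lt (mem_Ioi.mp ht)))).differentiableAt).differentiableWithinAt
    · intro t ht
      rw [interior_Ici] at ht
      have htpos : (0:ℝ) < t := lt_trans ht0 ht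
      rw [(hgd t (mem_Ici.mpr (le_of_lt (mem_Ioi.mp ht)))).deriv]
      have := hd t (mem_Ici.mpr (le_of_lt (mem_Ioi.mp ht)))
      rw [div_eq_mul_inv] at this
      linarith
  have hMf : f t0 < M := hM t0 self_mem_Ici
  set t1 : ℝ := t0 * Real.exp ((M - f t0) / c) with ht1def
  have ht1 : t0 ≤ t1 :=
    le_mul_of_one_le_right ht0.le (Real.one_le_exp (div_nonneg (by linarith) hc.le))
  have hkey := hmono (self_mem_Ici) ht1 ht1
  have hlog : Real.log t1 = Real.log t0 + (M - f t0) / c := by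
    rw [ht1def, Real.log_mul ht0.ne' (Real.exp_ne_zero _), Real.log_exp]
  rw [hg] at hkey
  simp only [hlog, mul_add] at hkey
  rw [mul_div_cancel₀ _ hc.ne'] at hkey
  linarith [hM t1 ht1]

private lemma tendsto_of_monotoneOn (f : ℝ → ℝ) (t0 M : ℝ)
    (hmono : MonotoneOn f (Ici t0)) (hb : ∀ t ∈ Ici t0, f t ≤ M) :
    ∃ L, L ≤ M ∧ (∀ t ∈ Ici t0, f t ≤ L) ∧ Tendsto f atTop (nhds L) := by
  set g : ℝ → ℝ := fun t => f (max t t0) with hgdef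
  have hgmono : Monotone g :=
    fun a b hab => hmono (le_max_right a t0) (le_max_right b t0) (max_le_max hab le_rfl)
  have hgbdd : BddAbove (range g) := ⟨M, by rintro x ⟨t, rfl⟩; exact hb _ (le_max_right t t0)⟩
  refine ⟨⨆ t, g t, ciSup_le fun t => hb _ (le_max_right t t0), ?_, ?_⟩
  · intro t ht
    have := le_ciSup hgbdd t
    simpa [hgdef, max_eq_left (mem_Ici.mp ht)] using this
  · refine (tendsto_atTop_ciSup hgmono hgbdd).congr' ?_
    filter_upwards [eventually_ge_atTop t0] with t ht
    rw [hgdef]; simp [max_eq_left ht]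


set_option maxHeartbeats 1000000 in
/-- Assuming the asymptotically conical conditions `λ(t)/t → 1` and `u1(t)/t² → 1` as
`t → ∞`, a solution of (instA2) defined for all forward time which lies in
`R1 = {a0 < −1, 0 < a2 < 1}` at some initial time `t* > 0` satisfies exactly one of:
either it lies at some later time in `R0 = {−1 < a0 < 1, 0 < a2 < 1}` or in
`R∞ = {a0 < −1, a2 > 1}`, or it remains in `R1` for all forward time and converges to
`(−1, 1)` as `t → ∞`. -/
theorem R1_dichotomy (u0 : ℝ) (lam u1 : ℝ → ℝ)
    (hlamc : ContinuousOn lam (Ioi 0))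
    (hlam : ∀ t ∈ Ioi (0 : ℝ), 0 < lam t)
    (hu1' : ∀ t ∈ Ioi (0 : ℝ), HasDerivAt u1 (2 * lam t) t)
    (hu1 : ∀ t ∈ Ioi (0 : ℝ), |u0| < u1 t)
    (hAClam : Tendsto (fun t => lam t / t) atTop (nhds 1))
    (hACu1 : Tendsto (fun t => u1 t / t ^ 2) atTop (nhds 1))
    (a0 a2 : ℝ → ℝ) (tstar : ℝ) (hts : 0 < tstar)
    (hsol : IsSolInstA2 u0 lam u1 a0 a2 (Ici tstar))
    (hinit : a0 tstar < -1 ∧ 0 < a2 tstar ∧ a2 tstar < 1) :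
    Xor'
      (∃ t, tstar < t ∧
        ((-1 < a0 t ∧ a0 t < 1 ∧ 0 < a2 t ∧ a2 t < 1) ∨ (a0 t < -1 ∧ 1 < a2 t)))
      ((∀ t, tstar ≤ t → a0 t < -1 ∧ 0 < a2 t ∧ a2 t < 1) ∧
        Tendsto (fun t => (a0 t, a2 t)) atTop (nhds ((-1 : ℝ), (1 : ℝ)))) := by
  obtain ⟨h0init, h2initpos, h2initlt⟩ := hinit
  set D0 : ℝ → ℝ := fun t => -(4 * lam t / (u1 t ^ 2 - u0 ^ 2)) *
    (a2 t ^ 2 * (u1 t - u0) + a0 t * u1 t + u0) with hD0def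
  set D2 : ℝ → ℝ := fun t => -(3 / (2 * lam t)) * a2 t * (a0 t + 1) with hD2def
  have hderiv0 : ∀ t, tstar ≤ t → HasDerivAt a0 (D0 t) t := fun t ht => (hsol t ht).1
  have hderiv2 : ∀ t, tstar ≤ t → HasDerivAt a2 (D2 t) t := fun t ht => (hsol t ht).2
  have hIci : ∀ t, tstar ≤ t → (0:ℝ) < t := fun t ht => lt_of_lt_of_le hts ht
  have hlamt : ∀ t, tstar ≤ t → 0 < lam t := fun t ht => hlam t (hIci t ht)
  have hu1t : ∀ t, tstar ≤ t → |u0| < u1 t := fun t ht => hu1 t (hIci t ht)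
  have hum : ∀ t, tstar ≤ t → 0 < u1 t - u0 := by
    intro t ht; have h := hu1t t ht; have := le_abs_self u0; linarith
  have hup : ∀ t, tstar ≤ t → 0 < u1 t + u0 := by
    intro t ht; have h := hu1t t ht; have := neg_abs_le u0; linarith
  have hu1pos : ∀ t, tstar ≤ t → 0 < u1 t := by
    intro t ht; have h := hu1t t ht; have := abs_nonneg u0; linarith
  have hmu : ∀ t, tstar ≤ t → 0 < u1 t ^ 2 - u0 ^ 2 := by
    intro t ht; nlinarith [hum t ht, hup t ht]
  have hD2pos : ∀ t, tstar ≤ t → a0 t < -1 → 0 < a2 t → 0 < D2 t := by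
    intro t ht h0 h2
    have hl := hlamt t ht
    have h3 : 0 < 3 / (2 * lam t) := by positivity
    simp only [hD2def]
    nlinarith [mul_pos (mul_pos h3 h2) (by linarith : 0 < -(a0 t + 1))]
  have hD0pos : ∀ t, tstar ≤ t → a0 t ≤ -1 → 0 ≤ a2 t → a2 t < 1 → 0 < D0 t := by
    intro t ht h0 h2 h2'
    have hl := hlamt t ht
    have hm := hmu t ht
    have hA : 0 < 4 * lam t / (u1 t ^ 2 - u0 ^ 2) := div_pos (by linarith) hm
    have h2sq : a2 t ^ 2 < 1 := by nlinarith
    have hQ : a2 t ^ 2 * (u1 t - u0) + a0 t * u1 t + u0 < 0 := by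
      nlinarith [hum t ht, hu1pos t ht]
    simp only [hD0def]
    nlinarith [mul_pos hA (neg_pos.mpr hQ)]
  -- main invariance step
  have hstay : ¬(∃ t, tstar < t ∧
        ((-1 < a0 t ∧ a0 t < 1 ∧ 0 < a2 t ∧ a2 t < 1) ∨ (a0 t < -1 ∧ 1 < a2 t))) →
      ∀ t, tstar ≤ t → a0 t < -1 ∧ 0 < a2 t ∧ a2 t < 1 := by
    intro hA
    by_contra hex
    rw [not_forall] at hex
    obtain ⟨te, hte⟩ := hex
    rw [Classical.not_imp] at hte
    set E : Set ℝ := {t | tstar ≤ t ∧ ¬(a0 t < -1 ∧ 0 < a2 t ∧ a2 t < 1)} with hE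
    have hEne : E.Nonempty := ⟨te, hte.1, hte.2⟩
    have hEbd : BddBelow E := ⟨tstar, fun t ht => ht.1⟩
    set T := sInf E with hTdef
    have hTt : tstar ≤ T := le_csInf hEne fun t ht => ht.1
    have hc0 : ContinuousAt a0 T := (hderiv0 T hTt).continuousAt
    have hc2 : ContinuousAt a2 T := (hderiv2 T hTt).continuousAt
    have hTE : ¬(a0 T < -1 ∧ 0 < a2 T ∧ a2 T < 1) := by
      intro hR
      have h1 : ∀ᶠ s in nhds T, (a0 s < -1 ∧ 0 < a2 s ∧ a2 s < 1) := by
        filter_upwards [hc0.eventually (eventually_lt_nhds hR.1),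
          hc2.eventually (eventually_gt_nhds hR.2.1),
          hc2.eventually (eventually_lt_nhds hR.2.2)] with s h1 h2 h3
        exact ⟨h1, h2, h3⟩
      obtain ⟨s, hs1, hs2⟩ := mem_closure_iff_nhds.mp (csInf_mem_closure hEne hEbd) _ h1
      exact hs2.2 hs1
    have hTlt : tstar < T := hTt.lt_of_ne (fun h => hTE (h ▸ ⟨h0init, h2initpos, h2initlt⟩))
    have hbefore : ∀ s, tstar ≤ s → s < T → (a0 s < -1 ∧ 0 < a2 s ∧ a2 s < 1) := by
      intro s hs1 hs2
      by_contra hn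
      exact absurd (csInf_le hEbd ⟨hs1, hn⟩) (not_le.2 hs2)
    have hIoomem : Ioo tstar T ∈ nhdsWithin T (Iio T) :=
      Ioo_mem_nhdsLT_of_mem ⟨hTlt, le_rfl⟩
    have hT0le : a0 T ≤ -1 := by
      have htd : Tendsto a0 (nhdsWithin T (Iio T)) (nhds (a0 T)) :=
        hc0.mono_left nhdsWithin_le_nhds
      refine le_of_tendsto htd ?_
      filter_upwards [hIoomem] with s hs
      exact (hbefore s hs.1.le hs.2).1.le
    have hT2le : a2 T ≤ 1 := by
      have htd : Tendsto a2 (nhdsWithin T (Iio T)) (nhds (a2 T)) :=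
        hc2.mono_left nhdsWithin_le_nhds
      refine le_of_tendsto htd ?_
      filter_upwards [hIoomem] with s hs
      exact (hbefore s hs.1.le hs.2).2.2.le
    have hcont2 : ContinuousOn a2 (Icc tstar T) := fun s hs =>
      (hderiv2 s hs.1).continuousAt.continuousWithinAt
    have hmono2 : StrictMonoOn a2 (Icc tstar T) := by
      apply strictMonoOn_of_deriv_pos (convex_Icc _ _) hcont2
      intro s hs
      rw [interior_Icc] at hs
      have hR := hbefore s hs.1.le hs.2
      rw [(hderiv2 s hs.1.le).deriv]
      exact hD2pos s hs.1.le hR.1 hR.2.1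
    have hT2pos : 0 < a2 T :=
      lt_trans h2initpos (hmono2 ⟨le_rfl, hTt⟩ ⟨hTt, le_rfl⟩ hTlt)
    rcases eq_or_lt_of_le hT0le with h0T | h0T
    · rcases eq_or_lt_of_le hT2le with h2T | h2T
      · -- corner case: Gronwall argument
        have hsub : Icc tstar T ⊆ Ioi 0 := fun s hs => lt_of_lt_of_le hts hs.1
        have hu1cont : ContinuousOn u1 (Icc tstar T) := fun s hs =>
          ((hu1' s (hsub hs)).continuousAt).continuousWithinAt
        have hlamcont : ContinuousOn lam (Icc tstar T) := hlamc.mono hsub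
        set g : ℝ → ℝ := fun s => 4 * lam s / (u1 s ^ 2 - u0 ^ 2) *
          (2 * (u1 s - u0) + u1 s) + 3 / (2 * lam s) with hgdef
        have hgcont : ContinuousOn g (Icc tstar T) := by
          apply ContinuousOn.add
          · exact ((continuousOn_const.mul hlamcont).div
              ((hu1cont.pow 2).sub continuousOn_const) (fun s hs => (hmu s hs.1).ne')).mul
              ((continuousOn_const.mul (hu1cont.sub continuousOn_const)).add hu1cont)
          · exact continuousOn_const.div (continuousOn_const.mul hlamcont)
              (fun s hs => by have := hlamt s hs.1; positivity)
        obtain ⟨s0, hs0, hKmaxOn⟩ :=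
          isCompact_Icc.exists_isMaxOn (nonempty_Icc.mpr hTt) hgcont
        have hKmax : ∀ s ∈ Icc tstar T, g s ≤ g s0 := hKmaxOn
        set K := g s0 with hKdef
        set W : ℝ → ℝ := fun s => (-1 - a0 s + (1 - a2 s)) * Real.exp (K * s) with hWdef
        have hWd : ∀ s ∈ Icc tstar T, HasDerivAt W
            ((-(D0 s) + -(D2 s)) * Real.exp (K * s) +
              (-1 - a0 s + (1 - a2 s)) * (Real.exp (K * s) * (K * 1))) s := by
          intro s hs
          have h := (((hasDerivAt_const s (-1:ℝ)).sub (hderiv0 s hs.1)).add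
            ((hasDerivAt_const s (1:ℝ)).sub (hderiv2 s hs.1))).mul
            (((hasDerivAt_id s).const_mul K).exp)
          simp only [id_eq] at h
          exact h.congr_deriv (by simp only [Pi.add_apply, Pi.sub_apply]; ring)
        have hWmono : MonotoneOn W (Icc tstar T) := by
          apply monotoneOn_of_deriv_nonneg (convex_Icc _ _)
          · exact fun s hs => (hWd s hs).continuousAt.continuousWithinAt
          · intro s hs
            rw [interior_Icc] at hs
            exact ((hWd s ⟨hs.1.le, hs.2.le⟩).differentiableAt).differentiableWithinAt
          · intro s hs
            rw [interior_Icc] at hs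
            rw [(hWd s ⟨hs.1.le, hs.2.le⟩).deriv]
            obtain ⟨hr0, hr1, hr2⟩ := hbefore s hs.1.le hs.2
            have hKs := hKmax s ⟨hs.1.le, hs.2.le⟩
            have hl := hlamt s hs.1.le
            have hm := hmu s hs.1.le
            have hum' := hum s hs.1.le
            have hu1p := hu1pos s hs.1.le
            have hA2 : 0 < 4 * lam s / (u1 s ^ 2 - u0 ^ 2) := div_pos (by linarith) hm
            have h32 : 0 < 3 / (2 * lam s) := by positivity
            have h1 : D0 s ≤ (4 * lam s / (u1 s ^ 2 - u0 ^ 2)) * (2 * (u1 s - u0) + u1 s) *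
                ((-1 - a0 s) + (1 - a2 s)) := by
              simp only [hD0def]
              nlinarith [mul_pos hA2 hum', mul_pos hA2 hu1p, sq_nonneg (1 - a2 s),
                mul_nonneg (mul_pos hA2 hum').le (sq_nonneg (1 - a2 s)),
                mul_nonneg (mul_pos hA2 hu1p).le (by linarith : (0:ℝ) ≤ 1 - a2 s),
                mul_nonneg (mul_pos hA2 hum').le (by linarith : (0:ℝ) ≤ -1 - a0 s)]
            have h2 : D2 s ≤ (3 / (2 * lam s)) * ((-1 - a0 s) + (1 - a2 s)) := by
              simp only [hD2def]
              nlinarith [mul_nonneg h32.le (by linarith : (0:ℝ) ≤ 1 - a2 s),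
                mul_nonneg (mul_nonneg h32.le hr1.le) (by linarith : (0:ℝ) ≤ -1 - a0 s),
                mul_nonneg h32.le (by linarith : (0:ℝ) ≤ -1 - a0 s)]
            have key : D0 s + D2 s ≤ g s * ((-1 - a0 s) + (1 - a2 s)) := by
              have := add_le_add h1 h2
              calc D0 s + D2 s ≤ _ := this
                _ = g s * ((-1 - a0 s) + (1 - a2 s)) := by simp only [hgdef]; ring
            have hVnn : 0 ≤ (-1 - a0 s) + (1 - a2 s) := by linarith
            have hgsK : g s * ((-1 - a0 s) + (1 - a2 s)) ≤ K * ((-1 - a0 s) + (1 - a2 s)) :=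
              mul_le_mul_of_nonneg_right hKs hVnn
            nlinarith [mul_le_mul_of_nonneg_right (key.trans hgsK) (Real.exp_pos (K * s)).le]
        have h1 : W tstar ≤ W T := hWmono ⟨le_rfl, hTt⟩ ⟨hTt, le_rfl⟩ hTt
        have hWT : W T = 0 := by
          simp only [hWdef]; rw [h0T, h2T]; ring
        have hWts : 0 < W tstar := by
          simp only [hWdef]
          exact mul_pos (by linarith) (Real.exp_pos _)
        rw [hWT] at h1
        linarith
      · -- exit through a0 = -1 into R0
        have hd0 : 0 < D0 T := hD0pos T hTt h0T.le hT2pos.le h2T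
        have hev := ev_slope (hderiv0 T hTt) hd0
        have hev2 : ∀ᶠ t in nhdsWithin T (Ioi T), 0 < a2 t :=
          (hc2.eventually (eventually_gt_nhds hT2pos)).filter_mono nhdsWithin_le_nhds
        have hev3 : ∀ᶠ t in nhdsWithin T (Ioi T), a2 t < 1 :=
          (hc2.eventually (eventually_lt_nhds h2T)).filter_mono nhdsWithin_le_nhds
        have hev4 : ∀ᶠ t in nhdsWithin T (Ioi T), a0 t < 1 := by
          refine (hc0.eventually (eventually_lt_nhds ?_)).filter_mono nhdsWithin_le_nhds
          rw [h0T]; norm_num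
        obtain ⟨t, h1, h2, h3, h4, h5⟩ :=
          (hev.and (hev2.and (hev3.and (hev4.and self_mem_nhdsWithin)))).exists
        exact hA ⟨t, lt_trans hTlt h5, Or.inl ⟨h0T ▸ h1, h4, h2, h3⟩⟩
    · rcases eq_or_lt_of_le hT2le with h2T | h2T
      · -- exit through a2 = 1 into R∞
        have hd2 : 0 < D2 T := hD2pos T hTt h0T hT2pos
        have hev := ev_slope (hderiv2 T hTt) hd2
        have hev2 : ∀ᶠ t in nhdsWithin T (Ioi T), a0 t < -1 :=
          (hc0.eventually (eventually_lt_nhds h0T)).filter_mono nhdsWithin_le_nhds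
        obtain ⟨t, h1, h2, h3⟩ := (hev.and (hev2.and self_mem_nhdsWithin)).exists
        exact hA ⟨t, lt_trans hTlt h3, Or.inr ⟨h2, h2T ▸ h1⟩⟩
      · exact hTE ⟨h0T, hT2pos, h2T⟩
  by_cases hA : ∃ t, tstar < t ∧
      ((-1 < a0 t ∧ a0 t < 1 ∧ 0 < a2 t ∧ a2 t < 1) ∨ (a0 t < -1 ∧ 1 < a2 t))
  · left
    refine ⟨hA, ?_⟩
    rintro ⟨hall, -⟩
    obtain ⟨t, ht1, ht2⟩ := hA
    have hR := hall t ht1.le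
    rcases ht2 with ⟨hx, -, -, -⟩ | ⟨-, hx⟩
    · linarith [hR.1]
    · linarith [hR.2.2]
  · right
    have hR1 := hstay hA
    refine ⟨⟨hR1, ?_⟩, hA⟩
    -- convergence part
    have hcont0 : ContinuousOn a0 (Ici tstar) := fun s hs =>
      (hderiv0 s hs).continuousAt.continuousWithinAt
    have hcont2 : ContinuousOn a2 (Ici tstar) := fun s hs =>
      (hderiv2 s hs).continuousAt.continuousWithinAt
    have hmono0 : MonotoneOn a0 (Ici tstar) := by
      apply monotoneOn_of_deriv_nonneg (convex_Ici _) hcont0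
      · intro s hs
        rw [interior_Ici] at hs
        exact ((hderiv0 s hs.le).differentiableAt).differentiableWithinAt
      · intro s hs
        rw [interior_Ici] at hs
        rw [(hderiv0 s hs.le).deriv]
        obtain ⟨p1, p2, p3⟩ := hR1 s hs.le
        exact (hD0pos s hs.le p1.le p2.le p3).le
    have hmono2 : MonotoneOn a2 (Ici tstar) := by
      apply monotoneOn_of_deriv_nonneg (convex_Ici _) hcont2
      · intro s hs
        rw [interior_Ici] at hs
        exact ((hderiv2 s hs.le).differentiableAt).differentiableWithinAt
      · intro s hs
        rw [interior_Ici] at hs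
        rw [(hderiv2 s hs.le).deriv]
        obtain ⟨p1, p2, p3⟩ := hR1 s hs.le
        exact (hD2pos s hs.le p1 p2).le
    obtain ⟨L0, hL0le, hL0ub, hL0t⟩ :=
      tendsto_of_monotoneOn a0 tstar (-1) hmono0 (fun t ht => (hR1 t ht).1.le)
    obtain ⟨L2, hL2le, hL2ub, hL2t⟩ :=
      tendsto_of_monotoneOn a2 tstar 1 hmono2 (fun t ht => (hR1 t ht).2.2.le)
    have hlam_ev : ∀ᶠ t in atTop, lam t ≤ 2 * t ∧ t / 2 ≤ lam t := by
      filter_upwards [hAClam.eventually (eventually_lt_nhds (by norm_num : (1:ℝ) < 2)),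
        hAClam.eventually (eventually_gt_nhds (by norm_num : (1:ℝ)/2 < 1)),
        eventually_gt_atTop (0:ℝ)] with t h1 h2 ht
      constructor
      · have := (div_lt_iff₀ ht).mp h1; linarith
      · have := (lt_div_iff₀ ht).mp h2; linarith
    have hu1_ev : ∀ᶠ t in atTop, u1 t ≤ 2 * t ^ 2 := by
      filter_upwards [hACu1.eventually (eventually_lt_nhds (by norm_num : (1:ℝ) < 2)),
        eventually_gt_atTop (0:ℝ)] with t h1 ht
      have h2 : (0:ℝ) < t ^ 2 := by positivity
      have := (div_lt_iff₀ h2).mp h1; linarith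
    have hL0 : L0 = -1 := by
      by_contra hne
      have hlt : L0 < -1 := lt_of_le_of_ne hL0le hne
      obtain ⟨t1, ht1⟩ := eventually_atTop.mp (hlam_ev.and (eventually_ge_atTop tstar))
      have hcpos : 0 < 3 * a2 tstar * (-1 - L0) / 4 := by
        have := mul_pos (mul_pos (by norm_num : (0:ℝ) < 3) h2initpos)
          (by linarith : (0:ℝ) < -1 - L0)
        linarith
      refine unbounded_of_deriv_ge a2 D2 (max t1 tstar) (3 * a2 tstar * (-1 - L0) / 4) 1
        (lt_of_lt_of_le hts (le_max_right _ _)) hcpos ?_ ?_ ?_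
      · exact fun t ht => hderiv2 t (le_trans (le_max_right _ _) ht)
      · intro t ht
        have hts' : tstar ≤ t := le_trans (le_max_right _ _) ht
        have h2t : lam t ≤ 2 * t := (ht1 t (le_trans (le_max_left _ _) ht)).1.1
        have htpos : (0:ℝ) < t := hIci t hts'
        obtain ⟨p1, p2, p3⟩ := hR1 t hts'
        have ha2lb : a2 tstar ≤ a2 t := hmono2 self_mem_Ici hts' hts'
        have ha0ub : a0 t ≤ L0 := hL0ub t hts'
        have hlp := hlamt t hts'
        have e1 : D2 t = (3 * a2 t * (-(a0 t) - 1)) / (2 * lam t) := by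
          simp only [hD2def]; ring
        rw [e1, div_le_div_iff₀ htpos (by positivity)]
        have hdelta : -1 - L0 ≤ -(a0 t) - 1 := by linarith
        have k0 : a2 tstar * (-1 - L0) ≤ a2 t * (-(a0 t) - 1) :=
          mul_le_mul ha2lb hdelta (by linarith) (by linarith)
        nlinarith [mul_le_mul_of_nonneg_right k0 (by linarith : (0:ℝ) ≤ 3 * t),
          mul_le_mul_of_nonneg_left h2t hcpos.le]
      · exact fun t ht => (hR1 t (le_trans (le_max_right _ _) ht)).2.2
    have hL2 : L2 = 1 := by
      by_contra hne
      have hlt : L2 < 1 := lt_of_le_of_ne hL2le hne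
      obtain ⟨t1, ht1⟩ :=
        eventually_atTop.mp ((hlam_ev.and hu1_ev).and (eventually_ge_atTop tstar))
      have hcpos : (0:ℝ) < (1 - L2) / 2 := by linarith
      refine unbounded_of_deriv_ge a0 D0 (max t1 tstar) ((1 - L2) / 2) (-1)
        (lt_of_lt_of_le hts (le_max_right _ _)) hcpos ?_ ?_ ?_
      · exact fun t ht => hderiv0 t (le_trans (le_max_right _ _) ht)
      · intro t ht
        have hts' : tstar ≤ t := le_trans (le_max_right _ _) ht
        have hforall := ht1 t (le_trans (le_max_left _ _) ht)
        have hllb : t / 2 ≤ lam t := hforall.1.1.2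
        have hu1ub : u1 t ≤ 2 * t ^ 2 := hforall.1.2
        have htpos : (0:ℝ) < t := hIci t hts'
        obtain ⟨p1, p2, p3⟩ := hR1 t hts'
        have ha2ub : a2 t ≤ L2 := hL2ub t hts'
        have hm := hmu t hts'
        have hum' := hum t hts'
        have hup' := hup t hts'
        have hu1p := hu1pos t hts'
        have hlp := hlamt t hts'
        have e1 : D0 t = (4 * lam t * (-(a2 t ^ 2 * (u1 t - u0) + a0 t * u1 t + u0))) /
            (u1 t ^ 2 - u0 ^ 2) := by
          simp only [hD0def]; ring
        rw [e1, div_le_div_iff₀ htpos hm]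
        have hQ1 : (1 - L2) * (u1 t - u0) ≤
            -(a2 t ^ 2 * (u1 t - u0) + a0 t * u1 t + u0) := by
          have hsq : (1 - L2) ≤ 1 - a2 t ^ 2 := by nlinarith
          have hterm : 0 ≤ (-(a0 t + 1)) * u1 t := mul_nonneg (by linarith) hu1p.le
          nlinarith [mul_le_mul_of_nonneg_right hsq hum'.le]
        have hQnn : 0 ≤ -(a2 t ^ 2 * (u1 t - u0) + a0 t * u1 t + u0) :=
          le_trans (mul_nonneg (by linarith) hum'.le) hQ1
        have hupub : u1 t + u0 ≤ 4 * t ^ 2 := by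
          have h1 : u0 ≤ u1 t := by have := hu1t t hts'; have := le_abs_self u0; linarith
          linarith
        have s1 : u1 t ^ 2 - u0 ^ 2 ≤ (u1 t - u0) * (4 * t ^ 2) := by
          nlinarith [mul_le_mul_of_nonneg_left hupub hum'.le]
        calc (1 - L2) / 2 * (u1 t ^ 2 - u0 ^ 2)
            ≤ (1 - L2) / 2 * ((u1 t - u0) * (4 * t ^ 2)) :=
              mul_le_mul_of_nonneg_left s1 (by linarith)
          _ = ((1 - L2) * (u1 t - u0)) * (2 * t ^ 2) := by ring
          _ ≤ (-(a2 t ^ 2 * (u1 t - u0) + a0 t * u1 t + u0)) * (2 * t ^ 2) :=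
              mul_le_mul_of_nonneg_right hQ1 (by positivity)
          _ ≤ 4 * lam t * (-(a2 t ^ 2 * (u1 t - u0) + a0 t * u1 t + u0)) * t := by
              nlinarith [mul_le_mul_of_nonneg_right
                (mul_le_mul_of_nonneg_left hllb hQnn) (by linarith : (0:ℝ) ≤ 4 * t)]
      · exact fun t ht => (hR1 t (le_trans (le_max_right _ _) ht)).1
    have hfinal := hL0t.prodMk_nhds hL2t
    rw [hL0, hL2] at hfinal
    exact hfinal
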